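/- Let G be a finite soluble group that is not nilpotent. Suppose there exist a prime p and an element x of G such that the cyclic subgroup ⟨x⟩ is a Sylow p-subgroup of G, ⟨x⟩ is 𝔑-abnormal in G, G = G′ ⋊ ⟨x⟩ (i.e. G′⟨x⟩ = G and G′ ∩ ⟨x⟩ = 1), the derived subgroup G′ equals the nilpotent residual G^𝔑 of G, and the subgroup G′⟨x^p⟩ is nilpotent. Then every proper subgroup of G is either 𝔑-subnormal in G or 𝔑-abnormal in G. -/

import Mathlib

variable {G : Type*}

/-- `K` is a maximal subgroup of `L`: `K < L` and there is no subgroup strictly between. -/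
def IsMaximalSubgroupOf [Group G] (K L : Subgroup G) : Prop :=
  K < L ∧ ∀ M : Subgroup G, K < M → M ≤ L → M = L

/-- The quotient of `L` by the normal core of `K` in `L` is nilpotent. -/
def NilpotentQuotByCore [Group G] (K L : Subgroup G) : Prop :=
  Group.IsNilpotent (↥L ⧸ (K.subgroupOf L).normalCore)

/-- The quotient of `L` by the normal core of `K` in `L` has nilpotent derived subgroup
(i.e. belongs to the formation `𝔑𝔄`). -/
def NAQuotByCore [Group G] (K L : Subgroup G) : Prop :=
  Group.IsNilpotent ↥(commutator (↥L ⧸ (K.subgroupOf L).normalCore))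

/-- `H` is `𝔑`-subnormal in `G`: `H = G` or there is a chain
`H = H₀ <· H₁ <· ... <· Hₙ = G` of maximal subgroups with each `Hᵢ/(Hᵢ₋₁)_{Hᵢ}` nilpotent. -/
def NSubnormal [Group G] (H : Subgroup G) : Prop :=
  H = ⊤ ∨ ∃ (n : ℕ) (c : Fin (n + 1) → Subgroup G),
    c 0 = H ∧ c (Fin.last n) = ⊤ ∧
    ∀ i : Fin n, IsMaximalSubgroupOf (c i.castSucc) (c i.succ) ∧
      NilpotentQuotByCore (c i.castSucc) (c i.succ)

/-- `H` is `𝔑𝔄`-subnormal in `G`: `H = G` or there is a chain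
`H = H₀ <· H₁ <· ... <· Hₙ = G` of maximal subgroups with each `Hᵢ/(Hᵢ₋₁)_{Hᵢ}`
having nilpotent derived subgroup. -/
def NASubnormal [Group G] (H : Subgroup G) : Prop :=
  H = ⊤ ∨ ∃ (n : ℕ) (c : Fin (n + 1) → Subgroup G),
    c 0 = H ∧ c (Fin.last n) = ⊤ ∧
    ∀ i : Fin n, IsMaximalSubgroupOf (c i.castSucc) (c i.succ) ∧
      NAQuotByCore (c i.castSucc) (c i.succ)

/-- `H` is `𝔑`-abnormal in `G`: for all `K`, `L` with `H ≤ K` and `K` maximal in `L`,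
the quotient `L/K_L` is not nilpotent. -/
def NAbnormal [Group G] (H : Subgroup G) : Prop :=
  ∀ K L : Subgroup G, H ≤ K → IsMaximalSubgroupOf K L → ¬ NilpotentQuotByCore K L

/-- `H` is `𝔑𝔄`-abnormal in `G`: for all `K`, `L` with `H ≤ K` and `K` maximal in `L`,
the quotient `L/K_L` does not have nilpotent derived subgroup. -/
def NAAbnormal [Group G] (H : Subgroup G) : Prop :=
  ∀ K L : Subgroup G, H ≤ K → IsMaximalSubgroupOf K L → ¬ NAQuotByCore K L

/-- `N` is the nilpotent residual `G^𝔑` of `G`: the smallest normal subgroup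
with nilpotent quotient. -/
def IsNilpotentResidual [Group G] (N : Subgroup G) : Prop :=
  ∃ hN : N.Normal,
    haveI := hN
    Group.IsNilpotent (G ⧸ N) ∧
      ∀ M : Subgroup G, ∀ hM : M.Normal,
        (haveI := hM; Group.IsNilpotent (G ⧸ M)) → N ≤ M

/-- `N` is the `𝔑𝔄`-residual `G^{𝔑𝔄}` of `G`: the smallest normal subgroup whose
quotient has nilpotent derived subgroup. -/
def IsNAResidual [Group G] (N : Subgroup G) : Prop :=
  ∃ hN : N.Normal,
    haveI := hN
    Group.IsNilpotent ↥(commutator (G ⧸ N)) ∧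
      ∀ M : Subgroup G, ∀ hM : M.Normal,
        (haveI := hM; Group.IsNilpotent ↥(commutator (G ⧸ M))) → N ≤ M

/-- `H` is an `𝔑`-projector of `G`: for every normal `N ⊴ G`, the image `HN/N` is a
maximal nilpotent subgroup of `G/N`. -/
def IsNProjector [Group G] (H : Subgroup G) : Prop :=
  ∀ N : Subgroup G, ∀ hN : N.Normal,
    haveI := hN
    Group.IsNilpotent ↥(H.map (QuotientGroup.mk' N)) ∧
      ∀ K : Subgroup (G ⧸ N), Group.IsNilpotent ↥K →
        H.map (QuotientGroup.mk' N) ≤ K → K = H.map (QuotientGroup.mk' N)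

/-
Put `T = G′⟨x^p⟩`. Since `x^p ∈ T` and `G′⟨x⟩ = G`, the quotient `G/T` has order `p`, so `T` is a
normal maximal subgroup with abelian quotient, hence `𝔑`-subnormal; as `T` is nilpotent, every
chain of maximal subgroups inside `T` has nilpotent factors, so every subgroup of `T` is
`𝔑`-subnormal. A subgroup `H ⊄ T` contains an element whose `p`-part `z` lies outside `T`; `z` lies
in a Sylow subgroup `⟨x^g⟩`, and since `⟨(x^g)^p⟩ ≤ T`, `z` generates `⟨x^g⟩`. So `H` contains a
conjugate of the `𝔑`-abnormal subgroup `⟨x⟩`, and `𝔑`-abnormality passes to conjugates and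
overgroups.
-/

open Subgroup

theorem isNilpotent_quotient_of_commutator_le [Group G] (N : Subgroup G) [N.Normal]
    (h : commutator G ≤ N) : Group.IsNilpotent (G ⧸ N) :=
  have : Group.IsNilpotent (G ⧸ commutator G) :=
    inferInstanceAs (Group.IsNilpotent (Abelianization G))
  Group.nilpotent_of_surjective (QuotientGroup.map _ N (MonoidHom.id G) h)
    (QuotientGroup.map_surjective_of_surjective _ N _ QuotientGroup.mk_surjective h)

theorem Subgroup.normalCore_comap {G' : Type*} [Group G] [Group G'] {f : G →* G'}
    (hf : Function.Surjective f) (H : Subgroup G') :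
    (H.comap f).normalCore = H.normalCore.comap f := by
  ext a
  change (∀ b, f (b * a * b⁻¹) ∈ H) ↔ ∀ c, c * f a * c⁻¹ ∈ H
  simp only [map_mul, map_inv]
  exact (hf.forall (p := fun c => c * f a * c⁻¹ ∈ H)).symm

theorem index_eq_of_sup_zpowers [Group G] {p : ℕ} [Fact p.Prime] {N : Subgroup G} [N.Normal]
    {x : G} (hsup : N ⊔ zpowers x = ⊤) (hx : x ∉ N) (hxp : x ^ p ∈ N) : N.index = p := by
  have htop : zpowers (QuotientGroup.mk' N x) = ⊤ := by
    rw [← MonoidHom.map_zpowers, ← map_top_of_surjective _ (QuotientGroup.mk'_surjective N),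
      ← hsup, Subgroup.map_sup, QuotientGroup.map_mk'_self, bot_sup_eq]
  rw [index_eq_card, ← card_top, ← htop, Nat.card_zpowers]
  exact orderOf_eq_prime (by rwa [← map_pow, QuotientGroup.mk'_apply, QuotientGroup.eq_one_iff])
    (by rwa [ne_eq, QuotientGroup.mk'_apply, QuotientGroup.eq_one_iff])

theorem exists_pow_notMem_isPGroup [Group G] [Finite G] {p : ℕ} [hp : Fact p.Prime]
    {T : Subgroup G} [T.Normal] (hT : IsPGroup p (G ⧸ T)) {h : G} (hh : h ∉ T) :
    ∃ m : ℕ, h ^ m ∉ T ∧ IsPGroup p (zpowers (h ^ m)) := by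
  obtain ⟨a, m, hpm, hord⟩ :=
    Nat.exists_eq_pow_mul_and_not_dvd (orderOf_pos h).ne' p hp.out.one_lt.ne'
  refine ⟨m, fun hmT => hpm ?_, .of_card (n := a) ?_⟩
  · obtain ⟨b, hb⟩ := IsPGroup.iff_orderOf.1 hT (h : G ⧸ T)
    have hb0 : b ≠ 0 := by
      rintro rfl
      exact hh ((QuotientGroup.eq_one_iff h).1 (orderOf_eq_one_iff.1 (by rw [hb, pow_zero])))
    have hdvd : orderOf (h : G ⧸ T) ∣ m :=
      orderOf_dvd_of_pow_eq_one ((QuotientGroup.eq_one_iff _).2 hmT)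
    exact (dvd_pow_self p hb0).trans (hb ▸ hdvd)
  · have hm0 : m ≠ 0 := by rintro rfl; simp at hpm
    rw [Nat.card_zpowers, orderOf_pow_of_dvd hm0 (hord ▸ dvd_mul_left m _), hord,
      Nat.mul_div_cancel _ (Nat.pos_of_ne_zero hm0)]

theorem IsPGroup.zpowers_eq_of_notMem_zpowers_pow [Group G] {p : ℕ} [hp : Fact p.Prime]
    {y z : G} (hy : IsPGroup p (zpowers y)) (hz : z ∈ zpowers y)
    (hzp : z ∉ zpowers (y ^ p)) : zpowers z = zpowers y := by
  obtain ⟨k, rfl⟩ := mem_zpowers_iff.1 hz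
  obtain ⟨n, hn⟩ := hy ⟨y, mem_zpowers y⟩
  have hyn : y ^ ((p : ℤ) ^ n) = 1 := by
    rw [← Nat.cast_pow, zpow_natCast]
    simpa [Subtype.ext_iff] using hn
  have hpk : ¬ (p : ℤ) ∣ k := by
    rintro ⟨t, rfl⟩
    exact hzp ⟨t, by rw [zpow_mul, zpow_natCast]⟩
  obtain ⟨u, v, huv⟩ : IsCoprime ((p : ℤ) ^ n) k :=
    ((Nat.prime_iff_prime_int.mp hp.out).coprime_iff_not_dvd.mpr hpk).pow_left
  refine le_antisymm (zpowers_le.2 hz) (zpowers_le.2 ⟨v, ?_⟩)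
  calc (y ^ k) ^ v = (y ^ ((p : ℤ) ^ n)) ^ u * (y ^ k) ^ v := by rw [hyn, one_zpow, one_mul]
    _ = y := by rw [← zpow_mul, ← zpow_mul, ← zpow_add, mul_comm _ u, mul_comm k, huv, zpow_one]

theorem exists_conj_zpowers_le [Group G] [Finite G] {p : ℕ} [Fact p.Prime] {x : G}
    {P : Sylow p G} (hP : (P : Subgroup G) = zpowers x) {T : Subgroup G} [T.Normal]
    (hT : IsPGroup p (G ⧸ T)) (hxp : x ^ p ∈ T) {H : Subgroup G} (hH : ¬ H ≤ T) :
    ∃ g : G, (zpowers x).map (MulAut.conj g).toMonoidHom ≤ H := by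
  obtain ⟨h, hhH, hhT⟩ := SetLike.not_le_iff_exists.1 hH
  obtain ⟨m, hmT, hpm⟩ := exists_pow_notMem_isPGroup hT hhT
  obtain ⟨Q, hQ⟩ := hpm.exists_le_sylow
  obtain ⟨g, rfl⟩ := MulAction.exists_smul_eq G P Q
  have hgP : ((g • P : Sylow p G) : Subgroup G) = zpowers ((MulAut.conj g).toMonoidHom x) := by
    rw [← MonoidHom.map_zpowers, ← hP]
    rfl
  have hyp : zpowers ((MulAut.conj g).toMonoidHom x ^ p) ≤ T := by
    rw [zpowers_le, ← map_pow]
    exact ‹T.Normal›.conj_mem _ hxp g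
  refine ⟨g, ?_⟩
  rw [MonoidHom.map_zpowers, ← IsPGroup.zpowers_eq_of_notMem_zpowers_pow (hgP ▸ (g • P).isPGroup')
    (hgP ▸ hQ (mem_zpowers _)) fun hmem => hmT (hyp hmem), zpowers_le]
  exact pow_mem hhH m

theorem isMaximalSubgroupOf_iff_covBy [Group G] {K L : Subgroup G} :
    IsMaximalSubgroupOf K L ↔ K ⋖ L := by
  refine and_congr_right fun _ => ⟨fun h M hKM hML => hML.ne (h M hKM hML.le),
    fun h M hKM hML => by_contra fun hne => h hKM (lt_of_le_of_ne hML hne)⟩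

theorem isMaximalSubgroupOf_top_of_index_prime [Group G] {T : Subgroup G}
    (hT : T.index.Prime) : IsMaximalSubgroupOf T ⊤ := by
  refine ⟨lt_top_iff_ne_top.2 fun h => by simp [h, Nat.not_prime_one] at hT, fun M hTM _ => ?_⟩
  rw [← relIndex_mul_index hTM.le, Nat.prime_mul_iff] at hT
  rcases hT with ⟨-, hM⟩ | ⟨-, hTM'⟩
  · exact index_eq_one.1 hM
  · exact absurd (relIndex_eq_one.1 hTM') hTM.not_ge

theorem IsMaximalSubgroupOf.map_mulEquiv {G' : Type*} [Group G] [Group G'] (e : G ≃* G')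
    {K L : Subgroup G} (h : IsMaximalSubgroupOf K L) :
    IsMaximalSubgroupOf (K.map (e : G →* G')) (L.map (e : G →* G')) :=
  isMaximalSubgroupOf_iff_covBy.2 <|
    (apply_covBy_apply_iff e.mapSubgroup).2 (isMaximalSubgroupOf_iff_covBy.1 h)

theorem NilpotentQuotByCore.of_isNilpotent [Group G] (K : Subgroup G) {L : Subgroup G}
    [Group.IsNilpotent L] : NilpotentQuotByCore K L :=
  inferInstanceAs (Group.IsNilpotent (L ⧸ _))

theorem NilpotentQuotByCore.of_commutator_le [Group G] {K L : Subgroup G} (h : ⁅L, L⁆ ≤ K) :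
    NilpotentQuotByCore K L := by
  refine isNilpotent_quotient_of_commutator_le _ (normal_le_normalCore.2 fun a ha => ?_)
  exact h (L.map_subtype_commutator ▸ mem_map_of_mem L.subtype ha)

theorem NilpotentQuotByCore.map_mulEquiv {G' : Type*} [Group G] [Group G'] (e : G ≃* G')
    {K L : Subgroup G} (h : NilpotentQuotByCore K L) :
    NilpotentQuotByCore (K.map (e : G →* G')) (L.map (e : G →* G')) := by
  set f := (e.subgroupMap L).toMonoidHom
  have hcomap : ((K.map (e : G →* G')).subgroupOf (L.map (e : G →* G'))).comap f =
      K.subgroupOf L := by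
    ext a
    simp [f, mem_subgroupOf, MulEquiv.coe_subgroupMap_apply]
  have hle : (K.subgroupOf L).normalCore ≤
      ((K.map (e : G →* G')).subgroupOf (L.map (e : G →* G'))).normalCore.comap f := by
    rw [← normalCore_comap (e.subgroupMap L).surjective, hcomap]
  have : Group.IsNilpotent (L ⧸ (K.subgroupOf L).normalCore) := h
  exact Group.nilpotent_of_surjective (QuotientGroup.map _ _ f hle)
    (QuotientGroup.map_surjective_of_surjective _ _ _
      (QuotientGroup.mk_surjective.comp (e.subgroupMap L).surjective) hle)

theorem NSubnormal.of_isMaximalSubgroupOf [Group G] {H M : Subgroup G} (hM : NSubnormal M)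
    (hmax : IsMaximalSubgroupOf H M) (hq : NilpotentQuotByCore H M) : NSubnormal H := by
  rcases hM with rfl | ⟨n, c, hc0, hclast, hstep⟩
  · exact Or.inr ⟨1, ![H, ⊤], rfl, rfl, fun i => by fin_cases i; exact ⟨hmax, hq⟩⟩
  · refine Or.inr ⟨n + 1, Fin.cons H c, rfl, hclast, Fin.cases ?_ fun j => ?_⟩
    · simpa [hc0] using And.intro hmax hq
    · simpa using hstep j

theorem NSubnormal.of_le [Group G] [Finite G] {T H : Subgroup G} (hT : NSubnormal T)
    [Group.IsNilpotent T] (hHT : H ≤ T) : NSubnormal H := by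
  induction H using WellFoundedGT.induction with
  | _ H ih =>
  obtain rfl | hlt := hHT.eq_or_lt
  · exact hT
  obtain ⟨M, hHM, hMT⟩ := exists_covBy_le_of_lt hlt
  have : Group.IsNilpotent M := Group.nilpotent_of_mulEquiv (subgroupOfEquivOfLe hMT)
  exact (ih M hHM.lt hMT).of_isMaximalSubgroupOf (isMaximalSubgroupOf_iff_covBy.2 hHM)
    (.of_isNilpotent H)

theorem NAbnormal.mono [Group G] {H K : Subgroup G} (h : NAbnormal H) (hHK : H ≤ K) :
    NAbnormal K :=
  fun A B hKA => h A B (hHK.trans hKA)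

theorem NAbnormal.map_mulEquiv {G' : Type*} [Group G] [Group G'] (e : G ≃* G')
    {H : Subgroup G} (h : NAbnormal H) : NAbnormal (H.map (e : G →* G')) := by
  intro K L hHK hmax hnil
  refine h _ _ ?_ (hmax.map_mulEquiv e.symm) (hnil.map_mulEquiv e.symm)
  rwa [map_equiv_eq_comap_symm, MulEquiv.symm_symm, ← map_le_iff_le_comap]

theorem stmt_9_general [Group G] [Finite G]
    (hG : ¬ Group.IsNilpotent G)
    (p : ℕ) (hp : p.Prime) (x : G)
    (hsyl : ∃ P : Sylow p G, (P : Subgroup G) = Subgroup.zpowers x)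
    (habn : NAbnormal (Subgroup.zpowers x))
    (hsup : commutator G ⊔ Subgroup.zpowers x = ⊤)
    (hnil : Group.IsNilpotent ↥(commutator G ⊔ Subgroup.zpowers (x ^ p))) :
    ∀ H : Subgroup G, H ≠ ⊤ → NSubnormal H ∨ NAbnormal H := by
  have : Fact p.Prime := ⟨hp⟩
  set T := commutator G ⊔ zpowers (x ^ p)
  have hGT : commutator G ≤ T := le_sup_left
  have : T.Normal := .of_commutator_le G hGT
  have hxp : x ^ p ∈ T := mem_sup_right (mem_zpowers _)
  have hxT : x ∉ T := fun hx => by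
    have hT : T = ⊤ := eq_top_iff.2 (hsup ▸ sup_le hGT (zpowers_le.2 hx))
    exact hG (Group.isNilpotent_top.1 (hT ▸ hnil))
  have hindex : T.index = p :=
    index_eq_of_sup_zpowers (eq_top_iff.2 (hsup ▸ sup_le_sup_right hGT _)) hxT hxp
  intro H _
  by_cases hHT : H ≤ T
  · have hTmax := isMaximalSubgroupOf_top_of_index_prime (hindex ▸ hp)
    exact Or.inl ((NSubnormal.of_isMaximalSubgroupOf (Or.inl rfl) hTmax
      (.of_commutator_le hGT)).of_le hHT)
  · obtain ⟨P, hP⟩ := hsyl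
    obtain ⟨g, hg⟩ := exists_conj_zpowers_le hP
      (.of_card (n := 1) (by rw [← index_eq_card, hindex, pow_one])) hxp hHT
    exact Or.inr ((habn.map_mulEquiv (MulAut.conj g)).mono hg)

theorem stmt_9 [Group G] [Finite G] [Group.IsSolvable G]
    (hG : ¬ Group.IsNilpotent G)
    (p : ℕ) (hp : p.Prime) (x : G)
    (hsyl : ∃ P : Sylow p G, (P : Subgroup G) = Subgroup.zpowers x)
    (habn : NAbnormal (Subgroup.zpowers x))
    (hsup : commutator G ⊔ Subgroup.zpowers x = ⊤)
    (hinf : commutator G ⊓ Subgroup.zpowers x = ⊥)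
    (hres : IsNilpotentResidual (commutator G))
    (hnil : Group.IsNilpotent ↥(commutator G ⊔ Subgroup.zpowers (x ^ p))) :
    ∀ H : Subgroup G, H ≠ ⊤ → NSubnormal H ∨ NAbnormal H :=
  stmt_9_general hG p hp x hsyl habn hsup hnil
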